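/- arXiv:2508.01613 — 8 statements merged into one kernel-verified Lean document; each statement's English description precedes it below -/
import Mathlib

section
/- Let (B,+,∘) be a finite left brace such that the multiplicative group (B,∘) is an internal direct product of subgroups B₁,...,Bᵣ whose orders are pairwise coprime. Then each Bᵢ is an ideal of B, and B is isomorphic as a left brace to the direct product of the left braces Bᵢ. -/
section BraceAux

variable {B : Type*} [Group B] [AddCommGroup B]

private theorem brace_mul_zero (hb : ∀ x y z : B, x * (y + z) + x = x * y + x * z)
    (x : B) : x * 0 = x := by
  have h := hb x 0 0
  rw [add_zero] at h
  exact (add_left_cancel h).symm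

private theorem brace_zero_eq_one (hb : ∀ x y z : B, x * (y + z) + x = x * y + x * z) :
    (0 : B) = 1 := by
  have := brace_mul_zero hb 1
  rwa [one_mul] at this

private theorem brace_mul_add (hb : ∀ x y z : B, x * (y + z) + x = x * y + x * z)
    (x y z : B) : x * (y + z) = x * y + x * z - x :=
  eq_sub_of_add_eq (hb x y z)

/-- The lambda map of a left brace, as an additive hom. -/
private def lam (hb : ∀ x y z : B, x * (y + z) + x = x * y + x * z) (x : B) : B →+ B where
  toFun y := -x + x * y
  map_zero' := by
    show -x + x * 0 = 0
    rw [brace_mul_zero hb]; simp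
  map_add' y z := by
    show -x + x * (y + z) = (-x + x * y) + (-x + x * z)
    rw [brace_mul_add hb]
    abel

private theorem lam_apply (hb : ∀ x y z : B, x * (y + z) + x = x * y + x * z)
    (x y : B) : lam hb x y = -x + x * y := rfl

private theorem mul_eq_add_lam (hb : ∀ x y z : B, x * (y + z) + x = x * y + x * z)
    (x y : B) : x * y = x + lam hb x y := by
  rw [lam_apply, add_neg_cancel_left]

private theorem brace_mul_neg (hb : ∀ x y z : B, x * (y + z) + x = x * y + x * z)
    (x y : B) : x * (-y) = x + x - x * y := by
  have h := brace_mul_add hb x y (-y)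
  rw [add_neg_cancel, brace_mul_zero hb] at h
  have h2 : x * y + x * (-y) = x + x := sub_eq_iff_eq_add.mp h.symm
  rw [eq_sub_iff_add_eq, add_comm (x * (-y)) (x * y)]
  exact h2

private theorem lam_comp (hb : ∀ x y z : B, x * (y + z) + x = x * y + x * z)
    (x y z : B) : lam hb x (lam hb y z) = lam hb (x * y) z := by
  rw [lam_apply, lam_apply, lam_apply, brace_mul_add hb, brace_mul_neg hb, mul_assoc]
  abel

private theorem lam_inv_lam (hb : ∀ x y z : B, x * (y + z) + x = x * y + x * z)
    (x y : B) : lam hb x⁻¹ (lam hb x y) = y := by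
  rw [lam_comp hb, inv_mul_cancel, lam_apply, one_mul, ← brace_zero_eq_one hb]
  abel

private theorem lam_self_inv (hb : ∀ x y z : B, x * (y + z) + x = x * y + x * z)
    (x : B) : lam hb x x⁻¹ = -x := by
  have h := mul_eq_add_lam hb x x⁻¹
  rw [mul_inv_cancel, ← brace_zero_eq_one hb] at h
  have := h.symm
  rw [add_eq_zero_iff_neg_eq] at this
  exact this.symm

/-- The set of `n`-torsion elements of `(B,+)` is a subgroup of `(B,∘)`. -/
private def Tsub (hb : ∀ x y z : B, x * (y + z) + x = x * y + x * z) (n : ℕ) : Subgroup B where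
  carrier := {b : B | n • b = 0}
  one_mem' := by
    show n • (1 : B) = 0
    rw [← brace_zero_eq_one hb, smul_zero]
  mul_mem' := by
    intro a c ha hc
    show n • (a * c) = 0
    rw [mul_eq_add_lam hb, smul_add, ha, ← AddMonoidHom.map_nsmul, hc, map_zero, add_zero]
  inv_mem' := by
    intro a ha
    show n • a⁻¹ = 0
    have h1 : a⁻¹ = lam hb a⁻¹ (-a) := by
      conv_lhs => rw [← lam_inv_lam hb a a⁻¹, lam_self_inv hb]
    rw [h1, ← AddMonoidHom.map_nsmul, smul_neg, ha, neg_zero, map_zero]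

private theorem mem_Tsub (hb : ∀ x y z : B, x * (y + z) + x = x * y + x * z)
    {n : ℕ} {b : B} : b ∈ Tsub hb n ↔ n • b = 0 := Iff.rfl

/-- The additive version of the same torsion subgroup. -/
private def Tadd (n : ℕ) : AddSubgroup B where
  carrier := {b : B | n • b = 0}
  zero_mem' := smul_zero n
  add_mem' := by
    intro a c ha hc
    show n • (a + c) = 0
    rw [smul_add, ha, hc, add_zero]
  neg_mem' := by
    intro a ha
    show n • (-a) = 0
    rw [smul_neg, ha, neg_zero]

private theorem card_Tsub_eq_Tadd (hb : ∀ x y z : B, x * (y + z) + x = x * y + x * z)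
    (n : ℕ) : Nat.card (Tsub hb n) = Nat.card (Tadd (B := B) n) :=
  Nat.card_congr (Equiv.subtypeEquivRight fun _ => Iff.rfl)

/-- Every prime dividing the cardinality of the `n`-torsion subgroup divides `n`. -/
private theorem prime_dvd_card_Tadd [Finite B] {n p : ℕ} (hp : p.Prime)
    (hdvd : p ∣ Nat.card (Tadd (B := B) n)) : p ∣ n := by
  have : Fintype (Tadd (B := B) n) := Fintype.ofFinite _
  rw [Nat.card_eq_fintype_card] at hdvd
  haveI : Fact p.Prime := ⟨hp⟩
  obtain ⟨y, hy⟩ := exists_prime_addOrderOf_dvd_card (G := Tadd (B := B) n) p hdvd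
  have hny : n • y = 0 := by
    apply Subtype.ext
    push_cast
    exact y.2
  have := addOrderOf_dvd_of_nsmul_eq_zero hny
  rwa [hy] at this

private theorem card_Tsub_dvd [Finite B] (hb : ∀ x y z : B, x * (y + z) + x = x * y + x * z)
    {n m : ℕ} (hnm : n * m = Nat.card B) (hco : n.Coprime m) :
    Nat.card (Tsub hb n) ∣ n := by
  have hdvdB : Nat.card (Tsub hb n) ∣ Nat.card B := Subgroup.card_subgroup_dvd_card _
  have hcop : (Nat.card (Tsub hb n)).Coprime m := by
    by_contra h
    obtain ⟨p, pp, hpg⟩ := Nat.exists_prime_and_dvd h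
    have h1 : p ∣ Nat.card (Tsub hb n) := hpg.trans (Nat.gcd_dvd_left _ _)
    have h2 : p ∣ m := hpg.trans (Nat.gcd_dvd_right _ _)
    rw [card_Tsub_eq_Tadd] at h1
    have h3 : p ∣ n := prime_dvd_card_Tadd pp h1
    exact pp.one_lt.ne' (Nat.dvd_one.mp (hco ▸ Nat.dvd_gcd h3 h2))
  exact hcop.dvd_of_dvd_mul_right (hnm ▸ hdvdB)

private theorem list_prod_pow' {M : Type*} [Monoid M] (n : ℕ) :
    ∀ l : List M, (∀ a ∈ l, ∀ b ∈ l, Commute a b) →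
      l.prod ^ n = (l.map (· ^ n)).prod := by
  intro l
  induction l with
  | nil => simp
  | cons a l ih =>
    intro hc
    have h1 : Commute a l.prod :=
      Commute.list_prod_right _ _ fun x hx =>
        hc a List.mem_cons_self x (List.mem_cons_of_mem a hx)
    rw [List.map_cons, List.prod_cons, List.prod_cons, h1.mul_pow,
      ih fun x hx y hy => hc x (List.mem_cons_of_mem a hx) y (List.mem_cons_of_mem a hy)]

end BraceAux

/-- A finite left brace whose multiplicative group is an internal direct
product of subgroups of pairwise coprime orders: each factor is an ideal (normal,
λ-invariant, additively closed) and the brace is the direct product of the factors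
(cross factors multiply additively). -/
theorem stmt0 {B : Type*} [Fintype B] [Group B] [AddCommGroup B]
    (hbrace : ∀ x y z : B, x * (y + z) + x = x * y + x * z)
    (r : ℕ) (S : Fin r → Subgroup B)
    (hnormal : ∀ i, (S i).Normal)
    (hcoprime : ∀ i j, i ≠ j → Nat.Coprime (Nat.card (S i)) (Nat.card (S j)))
    (hdirect : ∀ b : B, ∃! f : (i : Fin r) → S i, b = (List.ofFn fun i => (f i : B)).prod) :
    (∀ i, (∀ x : B, ∀ y ∈ S i, -x + x * y ∈ S i) ∧
      (∀ x ∈ S i, ∀ y ∈ S i, x + y ∈ S i)) ∧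
    (∀ i j, i ≠ j → ∀ x ∈ S i, ∀ y ∈ S j, x * y = x + y) := by
  classical
  set n : Fin r → ℕ := fun i => Nat.card (S i) with hn
  have hnpos : ∀ i, 0 < n i := fun i => Nat.card_pos
  -- orders of elements of S i divide n i
  have horder : ∀ i, ∀ x : B, x ∈ S i → orderOf x ∣ n i := by
    intro i x hx
    have h1 : orderOf (⟨x, hx⟩ : S i) ∣ Nat.card (S i) := orderOf_dvd_natCard _
    rwa [Subgroup.orderOf_mk] at h1
  -- elements of distinct factors commute
  have hcomm : ∀ i j, i ≠ j → ∀ x ∈ S i, ∀ y ∈ S j, Commute x y := by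
    intro i j hij x hx y hy
    have hc1 : x⁻¹ * (y⁻¹ * x * y) ∈ S i := by
      refine mul_mem (inv_mem hx) ?_
      have := (hnormal i).conj_mem x hx y⁻¹
      simpa [mul_assoc] using this
    have hc2 : (x⁻¹ * (y⁻¹ * x)) * y ∈ S j := by
      refine mul_mem ?_ hy
      have := (hnormal j).conj_mem y⁻¹ (inv_mem hy) x⁻¹
      simpa [mul_assoc] using this
    have hc1' : x⁻¹ * y⁻¹ * x * y ∈ S i := by
      simpa [mul_assoc] using hc1
    have hc2' : x⁻¹ * y⁻¹ * x * y ∈ S j := by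
      simpa [mul_assoc] using hc2
    have hdvd : orderOf (x⁻¹ * y⁻¹ * x * y) ∣ Nat.gcd (n i) (n j) :=
      Nat.dvd_gcd (horder i _ hc1') (horder j _ hc2')
    rw [hcoprime i j hij] at hdvd
    have h1 : x⁻¹ * y⁻¹ * x * y = 1 := orderOf_eq_one_iff.mp (Nat.dvd_one.mp hdvd)
    have : y⁻¹ * x * y = x := by
      have h3 := congrArg (x * ·) h1
      simpa [mul_assoc] using h3
    calc x * y = y * (y⁻¹ * x * y) := by group
    _ = y * x := by rw [this]
  -- n i -th powers of elements land in S i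
  have hpowmem : ∀ i, ∀ b : B, b ^ n i = 1 → b ∈ S i := by
    intro i b hbpow
    obtain ⟨f, hf, -⟩ := hdirect b
    have hlc : ∀ a ∈ List.ofFn (fun j => ((f j : B))), ∀ c ∈ List.ofFn (fun j => ((f j : B))),
        Commute a c := by
      intro a ha c hc
      rw [List.mem_ofFn] at ha hc
      obtain ⟨j, rfl⟩ := ha
      obtain ⟨k, rfl⟩ := hc
      rcases eq_or_ne j k with rfl | hjk
      · exact Commute.refl _
      · exact hcomm j k hjk _ (f j).2 _ (f k).2
    have hprodpow : (1 : B) = (List.ofFn fun j => ((f j : B) ^ n i)).prod := by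
      rw [← hbpow, hf, list_prod_pow' _ _ hlc, List.map_ofFn]
      rfl
    obtain ⟨g, -, hgu⟩ := hdirect 1
    have h1 : (fun j => (1 : S j)) = g := by
      apply hgu
      simp
    have h2 : (fun j => (f j) ^ n i) = g := by
      apply hgu
      simpa using hprodpow
    have hfj : ∀ j, (f j) ^ n i = 1 := by
      intro j
      have := congrFun h2 j
      rw [this, ← congrFun h1 j]
    have hone : ∀ j, j ≠ i → f j = 1 := by
      intro j hji
      have hd1 : orderOf (f j) ∣ n i := orderOf_dvd_of_pow_eq_one (hfj j)
      have hd2 : orderOf (f j) ∣ n j := by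
        have := orderOf_dvd_natCard (f j)
        exact this
      have : orderOf (f j) ∣ Nat.gcd (n j) (n i) := Nat.dvd_gcd hd2 hd1
      rw [hcoprime j i hji] at this
      exact orderOf_eq_one_iff.mp (Nat.dvd_one.mp this)
    rw [hf]
    apply Subgroup.list_prod_mem
    intro x hx
    rw [List.mem_ofFn] at hx
    obtain ⟨j, rfl⟩ := hx
    rcases eq_or_ne j i with rfl | hji
    · exact (f j).2
    · have hfj1 := hone j hji
      simp only [hfj1, OneMemClass.coe_one]
      exact one_mem _
  -- cardinality of B is the product of the n i
  have hcardB : Nat.card B = ∏ i, n i := by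
    have hbij : Function.Bijective
        (fun f : (i : Fin r) → S i => (List.ofFn fun i => (f i : B)).prod) := by
      constructor
      · intro f g hfg
        obtain ⟨f', -, hu⟩ := hdirect ((List.ofFn fun i => (f i : B)).prod)
        exact (hu f rfl).trans (hu g hfg).symm
      · intro b
        obtain ⟨f, hf, -⟩ := hdirect b
        exact ⟨f, hf.symm⟩
    rw [← Nat.card_congr (Equiv.ofBijective _ hbij), Nat.card_pi]
  -- key characterization: S i is exactly the additive n i torsion
  have hkey : ∀ i, ∀ b : B, b ∈ S i ↔ n i • b = 0 := by
    intro i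
    set M : ℕ := ∏ j ∈ Finset.univ.erase i, n j with hM
    have hMpos : 0 < M := Finset.prod_pos fun j _ => hnpos j
    have hnM : n i * M = Nat.card B := by
      rw [hcardB, hM, Finset.mul_prod_erase Finset.univ n (Finset.mem_univ i)]
    have hco : (n i).Coprime M := by
      apply Nat.Coprime.prod_right
      intro j hj
      exact hcoprime i j (Finset.ne_of_mem_erase hj).symm
    -- torsion subgroups
    have hTdvd : Nat.card (Tsub hbrace (n i)) ∣ n i := card_Tsub_dvd hbrace hnM hco
    have hWdvd : Nat.card (Tsub hbrace M) ∣ M :=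
      card_Tsub_dvd hbrace (by rw [mul_comm]; exact hnM) hco.symm
    -- surjection : T × W → B
    have hsurj : Function.Surjective
        (fun p : Tsub hbrace (n i) × Tsub hbrace M => ((p.1 : B) + (p.2 : B))) := by
      intro b
      obtain ⟨u, v, huv⟩ := Nat.isCoprime_iff_coprime.mpr hco
      have h0 : (Nat.card B) • b = 0 :=
        addOrderOf_dvd_iff_nsmul_eq_zero.mp (addOrderOf_dvd_natCard b)
      have h0' : ((n i : ℤ) * (M : ℤ)) • b = 0 := by
        have : ((n i : ℤ) * (M : ℤ)) = ((n i * M : ℕ) : ℤ) := by push_cast; ring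
        rw [this, natCast_zsmul, hnM, h0]
      have ht : (n i) • ((v * (M : ℤ)) • b) = 0 := by
        rw [← natCast_zsmul (n := n i), smul_smul]
        have : (n i : ℤ) * (v * M) = v * ((n i : ℤ) * M) := by ring
        rw [this, ← smul_smul, h0', smul_zero]
      have hw : M • ((u * (n i : ℤ)) • b) = 0 := by
        rw [← natCast_zsmul (n := M), smul_smul]
        have : (M : ℤ) * (u * (n i)) = u * ((n i : ℤ) * M) := by ring
        rw [this, ← smul_smul, h0', smul_zero]
      refine ⟨⟨⟨(v * (M : ℤ)) • b, ht⟩, ⟨(u * (n i : ℤ)) • b, hw⟩⟩, ?_⟩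
      show (v * (M : ℤ)) • b + (u * (n i : ℤ)) • b = b
      rw [← add_smul]
      have : v * (M : ℤ) + u * (n i : ℤ) = 1 := by rw [← huv]; ring
      rw [this, one_zsmul]
    have hle : Nat.card B ≤ Nat.card (Tsub hbrace (n i)) * Nat.card (Tsub hbrace M) := by
      have := Nat.card_le_card_of_surjective _ hsurj
      rwa [Nat.card_prod] at this
    -- conclude Nat.card (Tsub (n i)) = n i
    have hTcard : Nat.card (Tsub hbrace (n i)) = n i := by
      set a := Nat.card (Tsub hbrace (n i))
      set c := Nat.card (Tsub hbrace M)
      have ha : a ≤ n i := Nat.le_of_dvd (hnpos i) hTdvd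
      have hc : c ≤ M := Nat.le_of_dvd hMpos hWdvd
      have h1 : n i * M ≤ a * c := by rw [hnM]; exact hle
      have h2 : a * c ≤ a * M := Nat.mul_le_mul_left a hc
      have h3 : n i * M ≤ a * M := le_trans h1 h2
      have h4 : n i ≤ a := Nat.le_of_mul_le_mul_right h3 hMpos
      exact le_antisymm ha h4
    -- Tsub hbrace (n i) ≤ S i
    have hTle : Tsub hbrace (n i) ≤ S i := by
      intro b hbmem
      apply hpowmem i
      have h1 : orderOf (⟨b, hbmem⟩ : Tsub hbrace (n i)) ∣ Nat.card (Tsub hbrace (n i)) :=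
        orderOf_dvd_natCard _
      rw [Subgroup.orderOf_mk, hTcard] at h1
      exact orderOf_dvd_iff_pow_eq_one.mp h1
    have hEq : Tsub hbrace (n i) = S i := by
      apply Subgroup.eq_of_le_of_card_ge hTle
      rw [hTcard]
    intro b
    rw [← hEq]
    exact Iff.rfl
  -- wrap up
  refine ⟨fun i => ⟨?_, ?_⟩, ?_⟩
  · -- lambda invariance
    intro x y hy
    rw [hkey] at hy ⊢
    have : -x + x * y = lam hbrace x y := (lam_apply hbrace x y).symm
    rw [this, ← AddMonoidHom.map_nsmul, hy, map_zero]
  · -- additive closure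
    intro x hx y hy
    rw [hkey] at hx hy ⊢
    rw [smul_add, hx, hy, add_zero]
  · -- cross factors multiply additively
    intro i j hij x hx y hy
    have hlamy : lam hbrace x y ∈ S j := by
      rw [hkey] at hy ⊢
      rw [← AddMonoidHom.map_nsmul, hy, map_zero]
    have hlamx : lam hbrace y x ∈ S i := by
      rw [hkey] at hx ⊢
      rw [← AddMonoidHom.map_nsmul, hx, map_zero]
    have hc : x * y = y * x := hcomm i j hij x hx y hy
    have he : x + lam hbrace x y = y + lam hbrace y x := by
      rw [← mul_eq_add_lam hbrace, ← mul_eq_add_lam hbrace, hc]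
    -- the element x - lam hbrace y x lies in both torsion parts
    set c : B := x - lam hbrace y x with hcdef
    have hci : n i • c = 0 := by
      have h1 : n i • x = 0 := (hkey i x).mp hx
      have h2 : n i • lam hbrace y x = 0 := (hkey i _).mp hlamx
      rw [hcdef, smul_sub, h1, h2, sub_zero]
    have hcj : n j • c = 0 := by
      have hcj' : c = y - lam hbrace x y := by
        rw [hcdef, sub_eq_sub_iff_add_eq_add]
        exact he
      have h1 : n j • y = 0 := (hkey j y).mp hy
      have h2 : n j • lam hbrace x y = 0 := (hkey j _).mp hlamy
      rw [hcj', smul_sub, h1, h2, sub_zero]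
    have hc0 : c = 0 := by
      have hd1 : addOrderOf c ∣ n i := addOrderOf_dvd_iff_nsmul_eq_zero.mpr hci
      have hd2 : addOrderOf c ∣ n j := addOrderOf_dvd_iff_nsmul_eq_zero.mpr hcj
      have : addOrderOf c ∣ Nat.gcd (n i) (n j) := Nat.dvd_gcd hd1 hd2
      rw [hcoprime i j hij] at this
      exact AddMonoid.addOrderOf_eq_one_iff.mp (Nat.eq_one_of_dvd_one this)
    have hx' : x = lam hbrace y x := by
      have := sub_eq_zero.mp (hcdef ▸ hc0)
      exact this
    rw [hc, mul_eq_add_lam hbrace, ← hx', add_comm]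
end

section
/- Let B be a left brace, let i ≠ j, and let Bᵢ, Bⱼ be ideals of B with trivial intersection whose multiplicative product generates commuting factors (i.e., B = B₁∘⋯∘Bᵣ is a direct product decomposition of (B,∘) into subgroups of pairwise coprime orders). Then for x ∈ Bᵢ and y ∈ Bⱼ one has λₓ(y) = y, and consequently x∘y = x + y. -/
/-- In a left brace, if `I` and `J` are ideals with trivial intersection
and coprime orders, then for `x ∈ I`, `y ∈ J` one has `λₓ(y) = y` and `x∘y = x + y`. -/
theorem stmt1 {B : Type*} [Group B] [AddCommGroup B]
    (hbrace : ∀ x y z : B, x * (y + z) + x = x * y + x * z)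
    (I J : Subgroup B) (hIn : I.Normal) (hJn : J.Normal)
    (hIl : ∀ x : B, ∀ y ∈ I, -x + x * y ∈ I)
    (hJl : ∀ x : B, ∀ y ∈ J, -x + x * y ∈ J)
    (htriv : I ⊓ J = ⊥)
    (hcop : Nat.Coprime (Nat.card I) (Nat.card J)) :
    ∀ x ∈ I, ∀ y ∈ J, -x + x * y = y ∧ x * y = x + y := by
  -- x * 0 = x
  have h0 : ∀ x : B, x * 0 = x := by
    intro x
    have h := hbrace x 0 0
    rw [add_zero] at h
    exact (add_left_cancel h).symm
  -- 0 = 1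
  have h01 : (0 : B) = 1 := by
    have := h0 1
    rwa [one_mul] at this
  -- x * (-x⁻¹) = x + x
  have hneg : ∀ x : B, x * (-x⁻¹) = x + x := by
    intro x
    have h := hbrace x x⁻¹ (-x⁻¹)
    rw [add_neg_cancel, h0, mul_inv_cancel, ← h01, zero_add] at h
    exact h.symm
  -- a + b = a * (λ_{a⁻¹} b)
  have hadd : ∀ a b : B, a * (-a⁻¹ + a⁻¹ * b) = a + b := by
    intro a b
    have h := hbrace a (-a⁻¹) (a⁻¹ * b)
    rw [hneg, ← mul_assoc, mul_inv_cancel, one_mul] at h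
    have : a * (-a⁻¹ + a⁻¹ * b) + a = (a + b) + a := by rw [h]; abel
    exact add_right_cancel this
  -- ideals (λ-closed subgroups) are closed under negation
  have hmemneg : ∀ (S : Subgroup B), (∀ x : B, ∀ y ∈ S, -x + x * y ∈ S) →
      ∀ a ∈ S, -a ∈ S := by
    intro S hS a ha
    have := hS a a⁻¹ (inv_mem ha)
    rwa [mul_inv_cancel, ← h01, add_zero] at this
  -- ideals are closed under addition
  have hmemadd : ∀ (S : Subgroup B), (∀ x : B, ∀ y ∈ S, -x + x * y ∈ S) →
      ∀ a ∈ S, ∀ b ∈ S, a + b ∈ S := by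
    intro S hS a ha b hb
    have h1 : -a⁻¹ + a⁻¹ * b ∈ S := hS a⁻¹ b hb
    have := S.mul_mem ha h1
    rwa [hadd] at this
  intro x hx y hy
  -- x and y commute multiplicatively
  have hcomm : x * y = y * x := by
    have c1 : x * (y * x⁻¹ * y⁻¹) ∈ I := I.mul_mem hx (hIn.conj_mem x⁻¹ (inv_mem hx) y)
    have c2 : (x * y * x⁻¹) * y⁻¹ ∈ J := by
      have := hJn.conj_mem y hy x
      exact J.mul_mem this (inv_mem hy)
    have hmem : x * y * x⁻¹ * y⁻¹ ∈ I ⊓ J := ⟨by simpa [mul_assoc] using c1, c2⟩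
    rw [htriv, Subgroup.mem_bot] at hmem
    have h2 : x * y = 1 * (y * x) := by
      rw [← hmem]; group
    rwa [one_mul] at h2
  have hlxy : -x + x * y ∈ J := hJl x y hy
  -- d := -x + x*y - y lies in I
  have dI : -x + x * y - y ∈ I := by
    have h1 : -y + y * x ∈ I := hIl y x hx
    have h2 : -x ∈ I := hmemneg I hIl x hx
    have h3 := hmemadd I hIl _ h2 _ h1
    have heq : -x + x * y - y = -x + (-y + y * x) := by rw [hcomm]; abel
    rwa [heq]
  -- and in J
  have dJ : -x + x * y - y ∈ J := by
    have h2 : -y ∈ J := hmemneg J hJl y hy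
    have h3 := hmemadd J hJl _ hlxy _ h2
    rwa [← sub_eq_add_neg] at h3
  have hmem : -x + x * y - y ∈ I ⊓ J := ⟨dI, dJ⟩
  rw [htriv, Subgroup.mem_bot] at hmem
  have hzero : -x + x * y - y = 0 := by rw [hmem, h01]
  have hlam : -x + x * y = y := by
    have := sub_eq_zero.mp hzero
    exact this
  refine ⟨hlam, ?_⟩
  have h4 : x + (-x + x * y) = x + y := by rw [hlam]
  rwa [← add_assoc, add_neg_cancel, zero_add] at h4
end

section
/- Let (X,·) be a cycle set, i.e., each left multiplication σₓ(y) = x·y is a bijection of X and (x·y)·(x·z) = (y·x)·(y·z) holds for all x,y,z. Then the map M : X×X → X×X given by M(x,y) := (x·y, y·x) is bijective, provided X is finite and non-degenerate (the squaring map T(x) = x·x is bijective). -/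
/-- For a finite non-degenerate cycle set, the map
`M(x,y) = (x·y, y·x)` is bijective. -/
theorem stmt4 {X : Type*} [Fintype X] (op : X → X → X)
    (hbij : ∀ x, Function.Bijective (op x))
    (hcyc : ∀ x y z, op (op x y) (op x z) = op (op y x) (op y z))
    (hT : Function.Bijective fun x => op x x) :
    Function.Bijective fun p : X × X => (op p.1 p.2, op p.2 p.1) := by
  have hinj : Function.Injective (fun p : X × X => (op p.1 p.2, op p.2 p.1)) := by
    rintro ⟨x, y⟩ ⟨x', y'⟩ h
    simp only [Prod.mk.injEq] at h
    obtain ⟨h1, h2⟩ := h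
    -- key : (x·y)·(x·x) = (y·x)·(y·x)
    have e1 : op (op x y) (op x x) = op (op y x) (op y x) := hcyc x y x
    have e2 : op (op x' y') (op x' x') = op (op y' x') (op y' x') := hcyc x' y' x'
    have ex : op (op x y) (op x x) = op (op x y) (op x' x') := by
      rw [e1, h2, ← e2, ← h1]
    have hxx : op x x = op x' x' := (hbij (op x y)).injective ex
    have hx : x = x' := hT.injective hxx
    -- symmetric for y
    have f1 : op (op y x) (op y y) = op (op x y) (op x y) := hcyc y x y
    have f2 : op (op y' x') (op y' y') = op (op x' y') (op x' y') := hcyc y' x' y'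
    have ey : op (op y x) (op y y) = op (op y x) (op y' y') := by
      rw [f1, h1, ← f2, ← h2]
    have hyy : op y y = op y' y' := (hbij (op y x)).injective ey
    have hy : y = y' := hT.injective hyy
    simp [hx, hy]
  exact Finite.injective_iff_bijective.mp hinj
end

section
/- Let X be a finite latin cycle set with squaring map T(x) = x·x and let Fix(T) = {x ∈ X : x·x = x}. Then |Fix(T)| < |X|/2 + 1. -/
/-- For a finite latin cycle set, `|Fix(T)| < |X|/2 + 1`. -/
theorem stmt5 {X : Type*} [Fintype X] [DecidableEq X] (op : X → X → X)
    (hbij : ∀ x, Function.Bijective (op x))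
    (hcyc : ∀ x y z, op (op x y) (op x z) = op (op y x) (op y z))
    (hlatin : ∀ x, Function.Bijective fun y => op y x) :
    ((Finset.univ.filter fun x => op x x = x).card : ℚ) <
      (Fintype.card X : ℚ) / 2 + 1 := by
  classical
  set F : Finset X := Finset.univ.filter fun x => op x x = x with hF
  have h2 : 2 * F.card ≤ Fintype.card X + 1 := by
    rcases F.eq_empty_or_nonempty with he | ⟨x0, hx0⟩
    · simp [he]
    · have hx0fix : op x0 x0 = x0 := (Finset.mem_filter.mp hx0).2
      -- key: for y a fixed point distinct from x0, op x0 y is not a fixed point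
      have key : ∀ y, op y y = y → y ≠ x0 → op (op x0 y) (op x0 y) ≠ op x0 y := by
        intro y hy hyx hafix
        set a := op x0 y with ha
        set b := op y x0 with hb
        have e1 : op a x0 = op b b := by
          have := hcyc x0 y x0
          rwa [hx0fix] at this
        have e2 : op a a = op b y := by
          have := hcyc x0 y y
          rwa [hy] at this
        have hbx : b = x0 := by
          have : op b y = op x0 y := by rw [← e2, hafix]
          exact (hlatin y).1 this
        have hax : a = x0 := by
          have : op a x0 = op x0 x0 := by rw [e1, hbx, hx0fix]
          exact (hlatin x0).1 this
        have : y = x0 := (hbij x0).1 (by rw [← ha, hax, hx0fix])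
        exact hyx this
      have hinj : Set.InjOn (op x0) (F.erase x0) := fun u _ v _ h => (hbij x0).1 h
      have hmaps : ∀ y ∈ F.erase x0, op x0 y ∈ Finset.univ \ F := by
        intro y hy
        obtain ⟨hyne, hyF⟩ := Finset.mem_erase.mp hy
        have hyfix : op y y = y := (Finset.mem_filter.mp hyF).2
        simp only [Finset.mem_sdiff, Finset.mem_univ, true_and, hF, Finset.mem_filter,
          not_and]
        intro h
        exact key y hyfix hyne h
      have hcard : (F.erase x0).card ≤ (Finset.univ \ F).card :=
        Finset.card_le_card_of_injOn (op x0) hmaps hinj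
      have h3 : (F.erase x0).card + 1 = F.card := Finset.card_erase_add_one hx0
      have h4 : (Finset.univ \ F).card + F.card = Fintype.card X := by
        rw [Finset.card_sdiff_add_card_eq_card (Finset.subset_univ F), Finset.card_univ]
      omega
  rw [hF] at *
  have : ((Finset.univ.filter fun x => op x x = x).card : ℚ) * 2 ≤ Fintype.card X + 1 := by
    exact_mod_cast by linarith [h2]
  linarith
end

section
/- Let X be a latin cycle set and suppose x,z ∈ X satisfy x·x = x, z·z = z, and (x·z)·(x·z) = x·z. Then x = z. -/
/-- In a latin cycle set, if `x`, `z` and `x·z` are all fixed points of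
the squaring map, then `x = z`. -/
theorem stmt6 {X : Type*} (op : X → X → X)
    (hbij : ∀ x, Function.Bijective (op x))
    (hcyc : ∀ x y z, op (op x y) (op x z) = op (op y x) (op y z))
    (hlatin : ∀ x, Function.Bijective fun y => op y x)
    (x z : X) (hx : op x x = x) (hz : op z z = z)
    (hxz : op (op x z) (op x z) = op x z) : x = z := by
  -- h2 : x·z = (z·x)·z
  have h2 : op x z = op (op z x) z := by
    have h := hcyc x z z
    rw [hz, hxz] at h
    exact h
  -- h3 : x·z = (z·(z·x))·z
  have h3 : op x z = op (op z (op z x)) z := by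
    have h := hcyc (op z x) z z
    rw [hz, ← h2, hxz] at h
    exact h
  -- right injectivity at z : z·(z·x) = z·x
  have h4 : op z (op z x) = op z x := (hlatin z).injective (h3.symm.trans h2)
  -- left injectivity by z : z·x = x
  have h5 : op z x = x := (hbij z).injective h4
  -- right injectivity at x : z = x
  exact ((hlatin x).injective (h5.trans hx.symm)).symm
end

section
/- Let X be a finite indecomposable cycle set, Y a cycle set, and p : X → Y a surjective cycle set homomorphism. Then all fibers p⁻¹(y), y ∈ Y, have the same cardinality; in particular |Y| divides |X|. -/
/-- Fibers of an epimorphism from a finite indecomposable cycle set all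
have the same cardinality; in particular `|Y|` divides `|X|`. -/
theorem stmt10 {X Y : Type*} [Fintype X] [Fintype Y]
    (opX : X → X → X)
    (hbijX : ∀ x, Function.Bijective (opX x))
    (hcycX : ∀ x y z, opX (opX x y) (opX x z) = opX (opX y x) (opX y z))
    (opY : Y → Y → Y)
    (hbijY : ∀ y, Function.Bijective (opY y))
    (hcycY : ∀ x y z, opY (opY x y) (opY x z) = opY (opY y x) (opY y z))
    (f : X → Y) (hsurj : Function.Surjective f)
    (hhom : ∀ a b, f (opX a b) = opY (f a) (f b))
    (hind : ∀ a b : X, ∃ g ∈ Subgroup.closure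
      (Set.range fun x => Equiv.ofBijective (opX x) (hbijX x)), g a = b) :
    (∀ y₁ y₂ : Y, Nat.card {a : X // f a = y₁} = Nat.card {a : X // f a = y₂}) ∧
    Fintype.card Y ∣ Fintype.card X := by
  classical
  -- key: every element of the closure descends along f
  have key : ∀ g ∈ Subgroup.closure
      (Set.range fun x => Equiv.ofBijective (opX x) (hbijX x)),
      ∃ h : Equiv.Perm Y, ∀ x, f (g x) = h (f x) := by
    intro g hg
    refine Subgroup.closure_induction ?_ ?_ ?_ ?_ hg
    · rintro g ⟨x, rfl⟩
      exact ⟨Equiv.ofBijective (opY (f x)) (hbijY (f x)), fun b => hhom x b⟩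
    · exact ⟨Equiv.refl Y, fun x => rfl⟩
    · rintro g₁ g₂ _ _ ⟨h₁, H₁⟩ ⟨h₂, H₂⟩
      exact ⟨h₂.trans h₁, fun x => by simp [Equiv.Perm.mul_apply, H₁, H₂]⟩
    · rintro g _ ⟨h, H⟩
      refine ⟨h.symm, fun x => ?_⟩
      have := H (g⁻¹ x)
      simp only [Equiv.Perm.coe_inv, Equiv.apply_symm_apply] at this ⊢
      rw [this, Equiv.symm_apply_apply]
  have main : ∀ y₁ y₂ : Y, Nat.card {a : X // f a = y₁} = Nat.card {a : X // f a = y₂} := by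
    intro y₁ y₂
    obtain ⟨a, rfl⟩ := hsurj y₁
    obtain ⟨b, rfl⟩ := hsurj y₂
    obtain ⟨g, hg, hab⟩ := hind a b
    obtain ⟨h, H⟩ := key g hg
    have hfa : h (f a) = f b := by rw [← H a, hab]
    refine Nat.card_congr (g.subtypeEquiv fun x => ?_)
    constructor
    · intro hx; rw [H x, hx, hfa]
    · intro hx
      rw [H x, ← hfa] at hx
      exact h.injective hx
  refine ⟨main, ?_⟩
  by_cases hY : Nonempty Y
  · obtain ⟨y₀⟩ := hY
    have hsum : Fintype.card X = ∑ y : Y, Fintype.card {a : X // f a = y} := by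
      rw [← Finset.card_univ, Finset.card_eq_sum_card_fiberwise
        (fun x _ => Finset.mem_univ (f x))]
      simp [Fintype.card_subtype]
    have hconst : ∀ y : Y, Fintype.card {a : X // f a = y} = Fintype.card {a : X // f a = y₀} := by
      intro y
      have := main y y₀
      simpa [Nat.card_eq_fintype_card] using this
    rw [hsum, Finset.sum_congr rfl fun y _ => hconst y, Finset.sum_const, smul_eq_mul,
      Finset.card_univ]
    exact Dvd.intro _ rfl
  · have hX : IsEmpty X := ⟨fun x => hY ⟨f x⟩⟩
    simp [Fintype.card_eq_zero]
end

section
/- Let X be a cycle set and x ∈ X with x·x = x (a fixed point of the squaring map). In the left brace structure on 𝒢(X) (with multiplication given by composition and addition determined by σ_u⁻¹ + σ_v⁻¹ = σ_u⁻¹ ∘ σ_{σ_u(v)}⁻¹), one has σₓ⁻ᵐ = m·σₓ⁻¹ for all natural numbers m; consequently the multiplicative order of σₓ equals its additive order. -/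
/-- In the left brace structure on the permutation group of a cycle set
(multiplication = composition, addition determined by
`σ_u⁻¹ + σ_v⁻¹ = σ_u⁻¹ ∘ σ_{σ_u(v)}⁻¹`), if `x·x = x` then `σₓ⁻ᵐ = m • σₓ⁻¹` for all
`m`, and the multiplicative order of `σₓ` equals its additive order. -/
theorem stmt12 {X G : Type*} [Group G] [AddCommGroup G]
    (hbrace : ∀ a b c : G, a * (b + c) + a = a * b + a * c)
    (op : X → X → X)
    (hbij : ∀ x, Function.Bijective (op x))
    (hcyc : ∀ x y z, op (op x y) (op x z) = op (op y x) (op y z))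
    (σ : X → G)
    (hadd : ∀ u v : X, (σ u)⁻¹ + (σ v)⁻¹ = (σ u)⁻¹ * (σ (op u v))⁻¹)
    (x : X) (hx : op x x = x) :
    (∀ m : ℕ, ((σ x)⁻¹) ^ m = m • ((σ x)⁻¹)) ∧
    orderOf (σ x) = addOrderOf (σ x) := by
  set a : G := (σ x)⁻¹ with ha
  clear_value a
  -- the multiplicative identity coincides with the additive identity
  have h10 : (1 : G) = 0 := by
    have h := hbrace 1 0 0
    simpa using h
  -- a + a = a * a
  have haa : a + a = a * a := by
    have h := hadd x x
    rw [hx, ← ha] at h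
    exact h
  -- a * 0 = a
  have ha0 : a * 0 = a := by
    have h := hbrace a 0 0
    rw [add_zero] at h
    exact (add_left_cancel h.symm)
  -- the key distributivity step
  have step : ∀ n : ℕ, a * ((n + 1) • a) = (n + 2) • a := by
    intro n
    induction n with
    | zero =>
      simpa [one_nsmul, two_nsmul] using haa.symm
    | succ k ih =>
      have h := hbrace a ((k + 1) • a) a
      rw [ih, ← haa] at h
      have hl : (k + 1) • a + a = (k + 1 + 1) • a := (succ_nsmul a (k + 1)).symm
      rw [hl] at h
      have hr : (k + 2) • a + (a + a) = (k + 2 + 1) • a + a := by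
        rw [succ_nsmul a (k + 2), add_assoc]
      rw [hr] at h
      have h' := add_right_cancel h
      rw [show k + 1 + 2 = k + 2 + 1 from by omega]
      exact h'
  -- the key power identity
  have key : ∀ m : ℕ, a ^ m = m • a := by
    intro m
    induction m with
    | zero => simp [h10]
    | succ k ih =>
      cases k with
      | zero => simp
      | succ j =>
        rw [pow_succ', ih, step j]
  refine ⟨key, ?_⟩
  -- σ x = -a
  have hneg : σ x = -a := by
    have h := hbrace a a (-a)
    rw [add_neg_cancel, ha0, ← haa] at h
    have h2 : a * a + a * (-a) = a * a + 0 := by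
      rw [add_zero, ← haa]; exact h.symm
    have h3 : a * (-a) = 0 := add_left_cancel h2
    have h4 : a * (-a) = 1 := by rw [h3, h10]
    have h5 : -a = a⁻¹ := eq_inv_of_mul_eq_one_right h4
    rw [h5, ha, inv_inv]
  have hord : orderOf (σ x) = orderOf a := by
    rw [ha, orderOf_inv]
  have haddord : addOrderOf (σ x) = addOrderOf a := by
    rw [hneg, addOrderOf_neg]
  rw [hord, haddord]
  have hiff : ∀ n : ℕ, a ^ n = 1 ↔ n • a = 0 := by
    intro n
    rw [key n, h10]
  apply Nat.dvd_antisymm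
  · rw [orderOf_dvd_iff_pow_eq_one, hiff]
    exact addOrderOf_nsmul_eq_zero a
  · rw [addOrderOf_dvd_iff_nsmul_eq_zero, ← hiff]
    exact pow_orderOf_eq_one a
end

section
/- Let X be a finite non-degenerate cycle set whose squaring map T fixes more than |X|/2 + 1 points. Then X is not latin (i.e., some right multiplication y ↦ y·x fails to be bijective). -/
/-- A finite non-degenerate cycle set whose squaring map fixes more than
`|X|/2 + 1` points is not latin. -/
theorem stmt19 {X : Type*} [Fintype X] [DecidableEq X] (op : X → X → X)
    (hbij : ∀ x, Function.Bijective (op x))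
    (hcyc : ∀ x y z, op (op x y) (op x z) = op (op y x) (op y z))
    (hT : Function.Bijective fun x => op x x)
    (hfix : (Fintype.card X : ℚ) / 2 + 1 <
      ((Finset.univ.filter fun x => op x x = x).card : ℚ)) :
    ¬ ∀ x : X, Function.Bijective fun y => op y x := by
  intro hlatin
  set F := Finset.univ.filter (fun x => op x x = x) with hF
  -- For a fixed point x of T, the set of fixed points of σ_x has the same size as F,
  -- because right multiplication by x conjugates σ_x to T.
  have key : ∀ x ∈ F, (Finset.univ.filter fun y => op x y = y).card = F.card := by
    intro x hx
    rw [hF, Finset.mem_filter] at hx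
    obtain ⟨-, hxx⟩ := hx
    apply Finset.card_bij (fun y _ => op y x)
    · intro y hy
      rw [Finset.mem_filter] at hy ⊢
      refine ⟨Finset.mem_univ _, ?_⟩
      have h := hcyc x y x
      rw [hxx, hy.2] at h
      exact h.symm
    · intro y₁ h₁ y₂ h₂ heq
      exact (hlatin x).1 heq
    · intro z hz
      rw [hF, Finset.mem_filter] at hz
      obtain ⟨y, hy⟩ := (hlatin x).2 z
      refine ⟨y, ?_, hy⟩
      rw [Finset.mem_filter]
      refine ⟨Finset.mem_univ _, ?_⟩
      have hy' : op y x = z := hy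
      have h := hcyc x y x
      rw [hxx, hy', hz.2] at h
      exact (hlatin x).1 (show (fun y => op y x) (op x y) = (fun y => op y x) y from
        h.trans hy'.symm)
  -- Counting the pairs (x, y) with x ∈ F and op x y = y.
  have hle : F.card * F.card ≤ Fintype.card X := by
    have h1 : (F.sigma fun x => Finset.univ.filter fun y => op x y = y).card
        = F.card * F.card := by
      rw [Finset.card_sigma, Finset.sum_congr rfl key, Finset.sum_const, smul_eq_mul]
    calc F.card * F.card
        = (F.sigma fun x => Finset.univ.filter fun y => op x y = y).card := h1.symm
      _ ≤ (Finset.univ : Finset X).card := by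
          apply Finset.card_le_card_of_injOn (fun p => p.2)
          · intro p _
            exact Finset.mem_univ _
          · intro p hp q hq hpq
            simp only [Finset.mem_coe, Finset.mem_sigma, Finset.mem_filter] at hp hq
            have h2 : p.2 = q.2 := hpq
            have h1 : p.1 = q.1 := by
              apply (hlatin p.2).1
              show op p.1 p.2 = op q.1 p.2
              rw [hp.2.2, h2, hq.2.2]
            exact Sigma.ext h1 (heq_of_eq h2)
      _ = Fintype.card X := Finset.card_univ
  -- Rational arithmetic contradiction.
  have hleQ : ((F.card : ℚ) * F.card) ≤ (Fintype.card X : ℚ) := by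
    exact_mod_cast hle
  have hn0 : (0 : ℚ) ≤ (Fintype.card X : ℚ) := by positivity
  nlinarith [hfix, sq_nonneg ((Fintype.card X : ℚ))]
end
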